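/- The model-based lower bound is valid and is no looser than the CFQE lower bound: (i) the true marginalized transition kernel P(·|·,·) belongs to the model-based uncertainty set G; (ii) for every kernel P̃ ∈ G and every h ∈ {1,…,H+1} and state s, the Bellman value Ṽ^{P̃}_h(s) ≥ Σ_a π_e(a|s) f̂_h(s,a), where f̂ are the infinite-data CFQE iterates; consequently (iii) for every state s, Σ_a π_e(a|s) f̂_1(s,a) ≤ inf_{P̃ ∈ G} Ṽ^{P̃}_1(s) ≤ V_1(s). -/

import Mathlib

open Finset

noncomputable section

variable {S U A : Type*}

/-- Marginalized (observed) behavior policy `π_b(a|s) = Σ_u P(u|s) π_b(a|s,u)`. -/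
def piMarg [Fintype U] (Pu : S → U → ℝ) (pib : S → U → A → ℝ) (s : S) (a : A) : ℝ :=
  ∑ u, Pu s u * pib s u a

/-- Marginalized transition kernel `P(s'|s,a) = Σ_u P(u|s) T(s'|s,u,a)`. -/
def margKer [Fintype U] (Pu : S → U → ℝ) (T : S → U → A → S → ℝ)
    (s : S) (a : A) (s' : S) : ℝ :=
  ∑ u, Pu s u * T s u a s'

/-- Confounded observed kernel `P^b(s'|s,a) = Σ_u P(u|s)·(π_b(a|s,u)/π_b(a|s))·T(s'|s,u,a)`. -/
def confKer [Fintype U] (Pu : S → U → ℝ) (pib : S → U → A → ℝ) (T : S → U → A → S → ℝ)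
    (s : S) (a : A) (s' : S) : ℝ :=
  ∑ u, Pu s u * (pib s u a / piMarg Pu pib s a) * T s u a s'

/-- Bellman value of the evaluation policy under kernel `P`, indexed by the number of
remaining steps: `Vaux P r πe k = V_{H+1-k}` (so `Vaux _ _ _ 0 = V_{H+1} = 0`). -/
def Vaux [Fintype S] [Fintype A] (P : S → A → S → ℝ) (r : S → A → ℝ) (pie : S → A → ℝ) :
    ℕ → S → ℝ
  | 0 => fun _ => 0
  | (k + 1) => fun s => ∑ a, pie s a * (r s a + ∑ s', P s a s' * Vaux P r pie k s')

/-- Bellman Q-value with `k` remaining steps *after* the current one: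
`Qaux P r πe k = Q_{H-k}`, i.e. `Q_h(s,a) = r(s,a) + Σ_{s'} P(s'|s,a) V_{h+1}(s')`. -/
def Qaux [Fintype S] [Fintype A] (P : S → A → S → ℝ) (r : S → A → ℝ) (pie : S → A → ℝ)
    (k : ℕ) (s : S) (a : A) : ℝ :=
  r s a + ∑ s', P s a s' * Vaux P r pie k s'

/-- Infinite-data FQE iterates indexed by remaining steps: `fqeAux Pb r πe k = f̂_{H+1-k}`,
so `f̂_{H+1} = 0` and `f̂_h(s,a) = r(s,a) + Σ_{s'} P^b(s'|s,a) Σ_{a'} π_e(a'|s') f̂_{h+1}(s',a')`. -/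
def fqeAux [Fintype S] [Fintype A] (Pb : S → A → S → ℝ) (r : S → A → ℝ) (pie : S → A → ℝ) :
    ℕ → S → A → ℝ
  | 0 => fun _ _ => 0
  | (k + 1) => fun s a => r s a + ∑ s', Pb s a s' * ∑ a', pie s' a' * fqeAux Pb r pie k s' a'

/-- CFQE uncertainty set `B̃_{sa}`: functions `g : S → ℝ` with
`α(s,a) ≤ π_b(a|s)·g(s') ≤ β(s,a)` for all `s'` and
`Σ_{s'} π_b(a|s)·g(s')·P^b(s'|s,a) = 1`. -/
def Bset [Fintype S] [Fintype U] [Fintype A] (Pu : S → U → ℝ) (pib : S → U → A → ℝ)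
    (T : S → U → A → S → ℝ) (α β : S → A → ℝ) (s : S) (a : A) : Set (S → ℝ) :=
  {g | (∀ s', α s a ≤ piMarg Pu pib s a * g s' ∧ piMarg Pu pib s a * g s' ≤ β s a) ∧
    ∑ s', piMarg Pu pib s a * g s' * confKer Pu pib T s a s' = 1}

/-- Infinite-data CFQE iterates indexed by remaining steps: `cfqeAux ... k = f̂_{H+1-k}`,
so `f̂_{H+1} = 0` and
`f̂_h(s,a) = inf_{g ∈ B̃_{sa}} Σ_{s'} P^b(s'|s,a)·π_b(a|s)·g(s')·(r(s,a) + Σ_{a'} π_e(a'|s') f̂_{h+1}(s',a'))`. -/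
def cfqeAux [Fintype S] [Fintype U] [Fintype A] (Pu : S → U → ℝ) (pib : S → U → A → ℝ)
    (T : S → U → A → S → ℝ) (α β : S → A → ℝ) (r : S → A → ℝ) (pie : S → A → ℝ) :
    ℕ → S → A → ℝ
  | 0 => fun _ _ => 0
  | (k + 1) => fun s a =>
      sInf ((fun g : S → ℝ =>
        ∑ s', confKer Pu pib T s a s' * (piMarg Pu pib s a * g s') *
          (r s a + ∑ a', pie s' a' * cfqeAux Pu pib T α β r pie k s' a')) ''
        Bset Pu pib T α β s a)

/-- Model-based uncertainty set `G`: kernels `P̃` with nonnegative rows summing to one and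
`α(s,a)·P^b(s'|s,a) ≤ P̃(s'|s,a) ≤ β(s,a)·P^b(s'|s,a)` for all `s, a, s'`. -/
def Gset [Fintype S] [Fintype U] [Fintype A] (Pu : S → U → ℝ) (pib : S → U → A → ℝ)
    (T : S → U → A → S → ℝ) (α β : S → A → ℝ) : Set (S → A → S → ℝ) :=
  {Pt | ∀ s a, (∀ s', 0 ≤ Pt s a s') ∧ (∑ s', Pt s a s' = 1) ∧
    ∀ s', α s a * confKer Pu pib T s a s' ≤ Pt s a s' ∧
      Pt s a s' ≤ β s a * confKer Pu pib T s a s'}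

/-- The model-based lower bound is valid and no looser than the CFQE lower bound:
(i) the true marginalized kernel lies in `G`; (ii) for every `P̃ ∈ G` and every `h`,
`Ṽ^{P̃}_h(s) ≥ Σ_a π_e(a|s) f̂_h(s,a)`; (iii) hence
`Σ_a π_e(a|s) f̂_1(s,a) ≤ inf_{P̃∈G} Ṽ^{P̃}_1(s) ≤ V_1(s)`. -/
theorem model_based_tighter_than_cfqe
    [Fintype S] [Fintype U] [Fintype A] [Nonempty S] [Nonempty U] [Nonempty A]
    (H : ℕ) (hH : 1 ≤ H)
    (Pu : S → U → ℝ) (hPu0 : ∀ s u, 0 ≤ Pu s u) (hPu1 : ∀ s, ∑ u, Pu s u = 1)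
    (T : S → U → A → S → ℝ) (hT0 : ∀ s u a s', 0 ≤ T s u a s')
    (hT1 : ∀ s u a, ∑ s', T s u a s' = 1)
    (r : S → A → ℝ) (hr0 : ∀ s a, 0 ≤ r s a) (hr1 : ∀ s a, r s a ≤ 1)
    (pib : S → U → A → ℝ) (hpib0 : ∀ s u a, 0 < pib s u a)
    (hpib1 : ∀ s u, ∑ a, pib s u a = 1)
    (pie : S → A → ℝ) (hpie0 : ∀ s a, 0 ≤ pie s a) (hpie1 : ∀ s, ∑ a, pie s a = 1)
    (α β : S → A → ℝ) (hαpos : ∀ s a, 0 < α s a)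
    (hsens : ∀ s u a, α s a ≤ piMarg Pu pib s a / pib s u a ∧
      piMarg Pu pib s a / pib s u a ≤ β s a) :
    -- (i)
    margKer Pu T ∈ Gset Pu pib T α β ∧
    -- (ii)
    (∀ Pt ∈ Gset Pu pib T α β, ∀ h : ℕ, 1 ≤ h → h ≤ H + 1 → ∀ s : S,
      ∑ a, pie s a * cfqeAux Pu pib T α β r pie (H + 1 - h) s a ≤
        Vaux Pt r pie (H + 1 - h) s) ∧
    -- (iii)
    (∀ s : S,
      (∑ a, pie s a * cfqeAux Pu pib T α β r pie H s a ≤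
        sInf ((fun Pt : S → A → S → ℝ => Vaux Pt r pie H s) '' Gset Pu pib T α β)) ∧
      sInf ((fun Pt : S → A → S → ℝ => Vaux Pt r pie H s) '' Gset Pu pib T α β) ≤
        Vaux (margKer Pu T) r pie H s) := by
  classical
  have hpm : ∀ s a, 0 < piMarg Pu pib s a := by
    intro s a
    have hex : ∃ u : U, 0 < Pu s u := by
      by_contra hc
      push_neg at hc
      have h0 : ∑ u, Pu s u = 0 :=
        Finset.sum_eq_zero fun u _ => le_antisymm (hc u) (hPu0 s u)
      rw [hPu1 s] at h0; norm_num at h0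
    obtain ⟨u0, hu0⟩ := hex
    exact Finset.sum_pos' (fun u _ => mul_nonneg (hPu0 s u) (hpib0 s u a).le)
      ⟨u0, Finset.mem_univ _, mul_pos hu0 (hpib0 s u0 a)⟩
  have hαp : ∀ s u a, α s a * pib s u a ≤ piMarg Pu pib s a := by
    intro s u a
    calc α s a * pib s u a
        ≤ (piMarg Pu pib s a / pib s u a) * pib s u a :=
          mul_le_mul_of_nonneg_right (hsens s u a).1 (hpib0 s u a).le
      _ = piMarg Pu pib s a := div_mul_cancel₀ _ (hpib0 s u a).ne'
  have hβp : ∀ s u a, piMarg Pu pib s a ≤ β s a * pib s u a := by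
    intro s u a
    calc piMarg Pu pib s a
        = (piMarg Pu pib s a / pib s u a) * pib s u a :=
          (div_mul_cancel₀ _ (hpib0 s u a).ne').symm
      _ ≤ β s a * pib s u a :=
          mul_le_mul_of_nonneg_right (hsens s u a).2 (hpib0 s u a).le
  have hαβ : ∀ s a, α s a ≤ β s a := by
    intro s a
    obtain ⟨u⟩ := ‹Nonempty U›
    exact le_trans (hsens s u a).1 (hsens s u a).2
  have hck0 : ∀ s a s', 0 ≤ confKer Pu pib T s a s' := fun s a s' =>
    Finset.sum_nonneg fun u _ => mul_nonneg
      (mul_nonneg (hPu0 s u) (div_nonneg (hpib0 s u a).le (hpm s a).le)) (hT0 s u a s')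
  -- (i)
  have hmem : margKer Pu T ∈ Gset Pu pib T α β := by
    intro s a
    refine ⟨fun s' => Finset.sum_nonneg fun u _ => mul_nonneg (hPu0 s u) (hT0 s u a s'),
      ?_, ?_⟩
    · unfold margKer
      rw [Finset.sum_comm]
      simp only [← Finset.mul_sum, hT1, mul_one]
      exact hPu1 s
    · intro s'
      constructor
      · unfold confKer margKer
        rw [Finset.mul_sum]
        refine Finset.sum_le_sum fun u _ => ?_
        have h1 : α s a * (pib s u a / piMarg Pu pib s a) ≤ 1 := by
          rw [mul_div_assoc']
          exact (div_le_one (hpm s a)).mpr (hαp s u a)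
        have h2 : 0 ≤ Pu s u * T s u a s' := mul_nonneg (hPu0 s u) (hT0 s u a s')
        calc α s a * (Pu s u * (pib s u a / piMarg Pu pib s a) * T s u a s')
            = (Pu s u * T s u a s') * (α s a * (pib s u a / piMarg Pu pib s a)) := by ring
          _ ≤ (Pu s u * T s u a s') * 1 := mul_le_mul_of_nonneg_left h1 h2
          _ = Pu s u * T s u a s' := mul_one _
      · unfold confKer margKer
        rw [Finset.mul_sum]
        refine Finset.sum_le_sum fun u _ => ?_
        have h1 : 1 ≤ β s a * (pib s u a / piMarg Pu pib s a) := by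
          rw [mul_div_assoc']
          exact (one_le_div (hpm s a)).mpr (hβp s u a)
        have h2 : 0 ≤ Pu s u * T s u a s' := mul_nonneg (hPu0 s u) (hT0 s u a s')
        calc Pu s u * T s u a s'
            = (Pu s u * T s u a s') * 1 := (mul_one _).symm
          _ ≤ (Pu s u * T s u a s') * (β s a * (pib s u a / piMarg Pu pib s a)) :=
              mul_le_mul_of_nonneg_left h1 h2
          _ = β s a * (Pu s u * (pib s u a / piMarg Pu pib s a) * T s u a s') := by ring
  have cfqe_succ : ∀ k (s : S) (a : A), cfqeAux Pu pib T α β r pie (k + 1) s a =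
      sInf ((fun g : S → ℝ =>
        ∑ s', confKer Pu pib T s a s' * (piMarg Pu pib s a * g s') *
          (r s a + ∑ a', pie s' a' * cfqeAux Pu pib T α β r pie k s' a')) ''
        Bset Pu pib T α β s a) := fun _ _ _ => rfl
  have hf0 : ∀ k (s : S) (a : A), 0 ≤ cfqeAux Pu pib T α β r pie k s a := by
    intro k
    induction k with
    | zero => intro s a; exact le_of_eq rfl
    | succ k ih =>
      intro s a
      rw [cfqe_succ]
      apply Real.sInf_nonneg
      rintro x ⟨g, hg, rfl⟩
      refine Finset.sum_nonneg fun s' _ => ?_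
      have h1 : 0 ≤ piMarg Pu pib s a * g s' := le_trans (hαpos s a).le (hg.1 s').1
      have h2 : 0 ≤ r s a + ∑ a', pie s' a' * cfqeAux Pu pib T α β r pie k s' a' :=
        add_nonneg (hr0 s a)
          (Finset.sum_nonneg fun a' _ => mul_nonneg (hpie0 s' a') (ih s' a'))
      exact mul_nonneg (mul_nonneg (hck0 s a s') h1) h2
  -- (ii) core induction
  have main : ∀ Pt ∈ Gset Pu pib T α β, ∀ k (s : S),
      ∑ a, pie s a * cfqeAux Pu pib T α β r pie k s a ≤ Vaux Pt r pie k s := by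
    intro Pt hPt k
    induction k with
    | zero => intro s; simp [cfqeAux, Vaux]
    | succ k ih =>
      intro s
      have key : ∀ a, cfqeAux Pu pib T α β r pie (k + 1) s a ≤
          r s a + ∑ s', Pt s a s' * Vaux Pt r pie k s' := by
        intro a
        obtain ⟨hPt0, hPt1, hPtab⟩ := hPt s a
        set pm := piMarg Pu pib s a with hpmdef
        set W : S → ℝ := fun s' => ∑ a', pie s' a' * cfqeAux Pu pib T α β r pie k s' a'
          with hWdef
        set g : S → ℝ := fun s' =>
          if confKer Pu pib T s a s' = 0 then α s a / pm
          else Pt s a s' / (pm * confKer Pu pib T s a s') with hgdef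
        have hPb0 : ∀ s', confKer Pu pib T s a s' = 0 → Pt s a s' = 0 := by
          intro s' h0
          have h1 := (hPtab s').2
          rw [h0, mul_zero] at h1
          exact le_antisymm h1 (hPt0 s')
        have hterm : ∀ s', pm * g s' * confKer Pu pib T s a s' = Pt s a s' := by
          intro s'
          by_cases h0 : confKer Pu pib T s a s' = 0
          · rw [h0, mul_zero, hPb0 s' h0]
          · simp only [hgdef, h0, if_false]
            field_simp
            exact mul_div_cancel_left₀ _ (hpm s a).ne'
        have hgB : g ∈ Bset Pu pib T α β s a := by
          constructor
          · intro s'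
            by_cases h0 : confKer Pu pib T s a s' = 0
            · have : pm * g s' = α s a := by
                simp only [hgdef, h0, if_true]
                exact mul_div_cancel₀ _ (hpm s a).ne'
              rw [this]
              exact ⟨le_refl _, hαβ s a⟩
            · have hPbpos : 0 < confKer Pu pib T s a s' :=
                lt_of_le_of_ne (hck0 s a s') (Ne.symm h0)
              have hg' : pm * g s' = Pt s a s' / confKer Pu pib T s a s' := by
                simp only [hgdef, h0, if_false]
                field_simp
                exact mul_div_cancel_left₀ _ (hpm s a).ne'
              rw [hg']
              exact ⟨(le_div_iff₀ hPbpos).mpr ((hPtab s').1),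
                (div_le_iff₀ hPbpos).mpr ((hPtab s').2)⟩
          · calc ∑ s', pm * g s' * confKer Pu pib T s a s'
                = ∑ s', Pt s a s' := Finset.sum_congr rfl fun s' _ => hterm s'
              _ = 1 := hPt1
        have hbdd : BddBelow ((fun g : S → ℝ =>
            ∑ s', confKer Pu pib T s a s' * (pm * g s') * (r s a + W s')) ''
            Bset Pu pib T α β s a) := by
          refine ⟨0, ?_⟩
          rintro x ⟨g', hg', rfl⟩
          refine Finset.sum_nonneg fun s' _ => ?_
          have h1 : 0 ≤ pm * g' s' := le_trans (hαpos s a).le (hg'.1 s').1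
          have h2 : 0 ≤ r s a + W s' :=
            add_nonneg (hr0 s a)
              (Finset.sum_nonneg fun a' _ => mul_nonneg (hpie0 s' a') (hf0 k s' a'))
          exact mul_nonneg (mul_nonneg (hck0 s a s') h1) h2
        have hle : cfqeAux Pu pib T α β r pie (k + 1) s a ≤
            ∑ s', confKer Pu pib T s a s' * (pm * g s') * (r s a + W s') := by
          rw [cfqe_succ]
          exact csInf_le hbdd ⟨g, hgB, rfl⟩
        have heq : ∑ s', confKer Pu pib T s a s' * (pm * g s') * (r s a + W s')
            = ∑ s', Pt s a s' * (r s a + W s') := by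
          refine Finset.sum_congr rfl fun s' _ => ?_
          rw [← hterm s']; ring
        have h3 : ∑ s', Pt s a s' * (r s a + W s') ≤
            r s a + ∑ s', Pt s a s' * Vaux Pt r pie k s' := by
          have h4 : ∑ s', Pt s a s' * (r s a + W s')
              = r s a + ∑ s', Pt s a s' * W s' := by
            simp only [mul_add]
            rw [Finset.sum_add_distrib, ← Finset.sum_mul, hPt1, one_mul]
          rw [h4]
          exact add_le_add le_rfl
            (Finset.sum_le_sum fun s' _ =>
              mul_le_mul_of_nonneg_left (ih s') (hPt0 s'))
        calc cfqeAux Pu pib T α β r pie (k + 1) s a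
            ≤ ∑ s', confKer Pu pib T s a s' * (pm * g s') * (r s a + W s') := hle
          _ = ∑ s', Pt s a s' * (r s a + W s') := heq
          _ ≤ r s a + ∑ s', Pt s a s' * Vaux Pt r pie k s' := h3
      have hV : Vaux Pt r pie (k + 1) s =
          ∑ a, pie s a * (r s a + ∑ s', Pt s a s' * Vaux Pt r pie k s') := rfl
      rw [hV]
      exact Finset.sum_le_sum fun a _ =>
        mul_le_mul_of_nonneg_left (key a) (hpie0 s a)
  refine ⟨hmem, fun Pt hPt h _ _ s => main Pt hPt (H + 1 - h) s, fun s => ?_⟩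
  have hbdd : BddBelow ((fun Pt : S → A → S → ℝ => Vaux Pt r pie H s) ''
      Gset Pu pib T α β) :=
    ⟨∑ a, pie s a * cfqeAux Pu pib T α β r pie H s a, by
      rintro x ⟨Pt, hPt, rfl⟩; exact main Pt hPt H s⟩
  refine ⟨le_csInf ⟨_, Set.mem_image_of_mem _ hmem⟩ ?_, csInf_le hbdd ⟨margKer Pu T, hmem, rfl⟩⟩
  rintro x ⟨Pt, hPt, rfl⟩
  exact main Pt hPt H s
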